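/- Let f : S^1 → ℝ be continuous and non-constant. Then the lower box dimension of the real tree T(f) equals the lower variation index, and the upper box dimension of T(f) equals the upper variation index: lbd T(f) = I̲(f) and ubd T(f) = Ī(f). -/

import Mathlib

open Set Filter Metric Topology
open scoped ENNReal NNReal

noncomputable section

/-- A partition of `[0,1]` with `n+1` points `0 ≤ x₀ < x₁ < ⋯ < xₙ ≤ 1`. -/
def IsPartition (n : ℕ) (x : Fin (n + 1) → ℝ) : Prop :=
  StrictMono x ∧ ∀ i, x i ∈ Set.Icc (0 : ℝ) 1

/-- The variational sum `∑ |f(xᵢ) - f(xᵢ₊₁)|^p` of `f` along a partition. -/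
def varSum (f : ℝ → ℝ) (p : ℝ) (n : ℕ) (x : Fin (n + 1) → ℝ) : ℝ :=
  ∑ i : Fin n, |f (x i.castSucc) - f (x i.succ)| ^ p

/-- The `p`-variation `V^p(f)` of `f` over `[0,1]`. -/
def pVar (f : ℝ → ℝ) (p : ℝ) : ℝ≥0∞ :=
  ⨆ (n : ℕ) (x : Fin (n + 1) → ℝ) (_ : IsPartition n x), ENNReal.ofReal (varSum f p n x)

/-- The variation index `I(f) = sup {p ≥ 1 | V^p(f) = ∞}` (with `sup ∅ = 1`). -/
def varIndex (f : ℝ → ℝ) : ℝ≥0∞ :=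
  1 ⊔ ⨆ (p : ℝ) (_ : 1 ≤ p) (_ : pVar f p = ⊤), ENNReal.ofReal p

/-- The `(p,r)`-variation `V_r^p(f)`: the supremum of variational sums over partitions
all of whose increments satisfy `|f(xᵢ) - f(xᵢ₊₁)| = r`. -/
def prVar (f : ℝ → ℝ) (p r : ℝ) : ℝ≥0∞ :=
  ⨆ (n : ℕ) (x : Fin (n + 1) → ℝ) (_ : IsPartition n x)
    (_ : ∀ i : Fin n, |f (x i.castSucc) - f (x i.succ)| = r),
    ENNReal.ofReal (varSum f p n x)

/-- The upper variation content `V̄^p(f) = limsup_{r→0⁺} V_r^p(f)`. -/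
def uVarContent (f : ℝ → ℝ) (p : ℝ) : ℝ≥0∞ :=
  limsup (fun r => prVar f p r) (𝓝[>] (0 : ℝ))

/-- The lower variation content `V̲^p(f) = liminf_{r→0⁺} V_r^p(f)`. -/
def lVarContent (f : ℝ → ℝ) (p : ℝ) : ℝ≥0∞ :=
  liminf (fun r => prVar f p r) (𝓝[>] (0 : ℝ))

/-- The upper variation index `Ī(f) = sup {p ≥ 1 | V̄^p(f) = ∞}` (with `sup ∅ = 1`). -/
def upperVarIndex (f : ℝ → ℝ) : ℝ≥0∞ :=
  1 ⊔ ⨆ (p : ℝ) (_ : 1 ≤ p) (_ : uVarContent f p = ⊤), ENNReal.ofReal p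

/-- The lower variation index `I̲(f) = sup {p ≥ 1 | V̲^p(f) = ∞}` (with `sup ∅ = 1`). -/
def lowerVarIndex (f : ℝ → ℝ) : ℝ≥0∞ :=
  1 ⊔ ⨆ (p : ℝ) (_ : 1 ≤ p) (_ : lVarContent f p = ⊤), ENNReal.ofReal p

/-- The tree pseudometric `d_f(x,y) = f x + f y - 2 min_{[x∧y, x∨y]} f`. -/
def treeDist (f : ℝ → ℝ) (x y : ℝ) : ℝ :=
  f x + f y - 2 * sInf (f '' Set.uIcc x y)

/-- The maximal cardinality of an `r`-separated subset of `A` with respect to the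
(pseudo)distance `d`. -/
def Nsep {X : Type*} (d : X → X → ℝ) (A : Set X) (r : ℝ) : ℕ :=
  sSup {n | ∃ s : Finset X, (s : Set X) ⊆ A ∧ s.card = n ∧
    ∀ x ∈ s, ∀ y ∈ s, x ≠ y → r < d x y}

/-- Upper box dimension associated with a counting function `N`. -/
def ubdOf (N : ℝ → ℕ) : ℝ≥0∞ :=
  limsup (fun r : ℝ => ENNReal.ofReal (Real.log (N r : ℝ) / (-Real.log r))) (𝓝[>] (0 : ℝ))

/-- Lower box dimension associated with a counting function `N`. -/
def lbdOf (N : ℝ → ℕ) : ℝ≥0∞ :=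
  liminf (fun r : ℝ => ENNReal.ofReal (Real.log (N r : ℝ) / (-Real.log r))) (𝓝[>] (0 : ℝ))

/-- Upper box dimension of the real tree `T(g)` of an excursion `g`, computed through
`r`-separated subsets of `([0,1], d_g)` (these correspond exactly to `r`-separated subsets
of the metric quotient `T(g)`). -/
def ubdTree (g : ℝ → ℝ) : ℝ≥0∞ := ubdOf (fun r => Nsep (treeDist g) (Set.Icc 0 1) r)

/-- Lower box dimension of the real tree `T(g)` of an excursion `g`. -/
def lbdTree (g : ℝ → ℝ) : ℝ≥0∞ := lbdOf (fun r => Nsep (treeDist g) (Set.Icc 0 1) r)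

/-- The modified upper box dimension of the real tree `T(g)`:
the infimum over countable covers of `sup_i ubd`. -/
def umbdTree (g : ℝ → ℝ) : ℝ≥0∞ :=
  ⨅ (U : ℕ → Set ℝ) (_ : Set.Icc (0 : ℝ) 1 ⊆ ⋃ i, U i),
    ⨆ i, ubdOf (fun r => Nsep (treeDist g) (U i ∩ Set.Icc 0 1) r)

/-- The graph `Γ(g) = {(x, g x) | x ∈ [0,1]} ⊆ ℝ²`. -/
def graphSet (g : ℝ → ℝ) : Set (ℝ × ℝ) := {q | ∃ x ∈ Set.Icc (0 : ℝ) 1, q = (x, g x)}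

/-- Upper box dimension of the graph of `g` over `[0,1]`. -/
def ubdGraph (g : ℝ → ℝ) : ℝ≥0∞ :=
  ubdOf (fun r => Nsep (fun u v : ℝ × ℝ => dist u v) (graphSet g) r)

/-- `τ : ℝ → ℝ` is a lift of a homeomorphism of the circle `S¹ = ℝ/ℤ`. -/
def IsCircleHomeoLift (τ : ℝ → ℝ) : Prop :=
  Continuous τ ∧ Function.Bijective τ ∧
    ((∀ x, τ (x + 1) = τ x + 1) ∨ (∀ x, τ (x + 1) = τ x - 1))

end

/-!
`V_r^p(f) = M_f(r) r^p`, where `M_f(r)` is the largest number of consecutive increments of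
size exactly `r` along an increasing sequence in `[0,1]`. Hence the variation indices are the
critical exponents of `M_f(r) r^p` as `r → 0⁺`, just as the box dimensions are those of
`N(r) r^p` for the packing numbers `N(r)` of `T(g)`. Critical exponents do not move if one
count is bounded by an affine function of the other at a proportional scale, so it suffices to
compare `M_f` with `N` in that way. Rotating the circle changes `M` by at most a factor two.
A greedy `ρ`-chain cuts `[0,1]` into cells on which `g` oscillates by less than `ρ`, so each
cell has `d_g`-diameter at most `4ρ` and `N(4ρ) ≤ M_g(ρ) + 1`. Conversely, the tops of the
up-steps of a `ρ`-chain are pairwise `ρ`-apart in `d_g`, and so are the bottoms of the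
down-steps, so `M_g(ρ) ≤ 2 N(ρ/2)`. Finally `N(r) ≳ 1/r` because `g` is not constant, so both
box dimensions are at least `1`, which matches the convention `sup ∅ = 1` in the indices.
-/

noncomputable section

section dimension

def scaledCount (N : ℝ → ℕ) (p r : ℝ) : ℝ≥0∞ := ENNReal.ofReal (N r * r ^ p)

def ScaleDominated (F₁ F₂ : ℝ → ℕ) : Prop :=
  ∃ c > (0 : ℝ), ∃ C₁ C₂ : ℕ, ∀ r > 0, F₁ r ≤ C₁ * F₂ (c * r) + C₂

variable {N F₁ F₂ F₃ : ℝ → ℕ} {p : ℝ}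

theorem one_lt_natCast_mul_rpow_iff {n : ℕ} {q r : ℝ} (hr : r ∈ Ioo (0 : ℝ) 1) (hq : 0 ≤ q) :
    1 < n * r ^ q ↔ q < Real.log n / -Real.log r := by
  have hlog : 0 < -Real.log r := neg_pos.2 (Real.log_neg hr.1 hr.2)
  rcases Nat.eq_zero_or_pos n with rfl | hn
  · simp only [Nat.cast_zero, zero_mul, Real.log_zero, zero_div]
    exact iff_of_false (by norm_num) hq.not_gt
  have hrq := Real.rpow_pos_of_pos hr.1 q
  have hpos : 0 < (n : ℝ) * r ^ q := mul_pos (Nat.cast_pos.2 hn) hrq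
  rw [← Real.log_pos_iff hpos.le, Real.log_mul (Nat.cast_pos.2 hn).ne' hrq.ne', Real.log_rpow hr.1,
    lt_div_iff₀ hlog]
  constructor <;> intro h <;> linarith

theorem eventually_le_scaledCount {q : ℝ} (hq : 0 ≤ q) (hpq : p < q) (K : ℝ≥0) :
    ∀ᶠ r in 𝓝[>] 0, ENNReal.ofReal q < ENNReal.ofReal (Real.log (N r) / -Real.log r) →
      (K : ℝ≥0∞) ≤ scaledCount N p r := by
  filter_upwards [(tendsto_rpow_neg_nhdsGT_zero (sub_neg.2 hpq)).eventually_ge_atTop (K : ℝ),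
    Ioo_mem_nhdsGT one_pos] with r hK hr hlt
  have h1 := (one_lt_natCast_mul_rpow_iff hr hq).2
    ((ENNReal.ofReal_lt_ofReal_iff_of_nonneg hq).1 hlt)
  have hsplit : (N r : ℝ) * r ^ p = r ^ (p - q) * (N r * r ^ q) := by
    have := (Real.rpow_pos_of_pos hr.1 q).ne'
    rw [Real.rpow_sub hr.1]; field_simp
  rw [scaledCount, hsplit, ← ENNReal.ofReal_coe_nnreal]
  exact ENNReal.ofReal_le_ofReal
    (hK.trans (le_mul_of_one_le_right (Real.rpow_nonneg hr.1.le _) h1.le))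

theorem eventually_scaledCount_le_one (hp : 0 ≤ p) :
    ∀ᶠ r in 𝓝[>] 0, ENNReal.ofReal (Real.log (N r) / -Real.log r) < ENNReal.ofReal p →
      scaledCount N p r ≤ 1 := by
  filter_upwards [Ioo_mem_nhdsGT one_pos] with r hr hlt
  rw [scaledCount, ← ENNReal.ofReal_one]
  exact ENNReal.ofReal_le_ofReal <| not_lt.1 fun h =>
    ((one_lt_natCast_mul_rpow_iff hr hp).1 h).not_gt (ENNReal.ofReal_lt_ofReal_iff'.1 hlt).1

theorem limsup_scaledCount_eq_top (h : ENNReal.ofReal p < ubdOf N) :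
    limsup (scaledCount N p) (𝓝[>] 0) = ⊤ := by
  obtain ⟨q, hq, hpq, hqN⟩ := ENNReal.lt_iff_exists_real_btwn.1 h
  have hfreq := frequently_lt_of_lt_limsup (by isBoundedDefault) hqN
  refine ENNReal.eq_top_of_forall_nnreal_le fun K => le_limsup_of_frequently_le ?_
  exact (hfreq.and_eventually
    (eventually_le_scaledCount hq (ENNReal.ofReal_lt_ofReal_iff'.1 hpq).1 K)).mono
    fun _ h => h.2 h.1

theorem liminf_scaledCount_eq_top (h : ENNReal.ofReal p < lbdOf N) :
    liminf (scaledCount N p) (𝓝[>] 0) = ⊤ := by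
  obtain ⟨q, hq, hpq, hqN⟩ := ENNReal.lt_iff_exists_real_btwn.1 h
  have hev := eventually_lt_of_lt_liminf hqN
  refine ENNReal.eq_top_of_forall_nnreal_le fun K => le_liminf_of_le (by isBoundedDefault) ?_
  exact (hev.and (eventually_le_scaledCount hq (ENNReal.ofReal_lt_ofReal_iff'.1 hpq).1 K)).mono
    fun _ h => h.2 h.1

theorem limsup_scaledCount_le_one (hp : 0 ≤ p) (h : ubdOf N < ENNReal.ofReal p) :
    limsup (scaledCount N p) (𝓝[>] 0) ≤ 1 :=
  limsup_le_of_le (by isBoundedDefault) <|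
    ((eventually_lt_of_limsup_lt h).and (eventually_scaledCount_le_one hp)).mono fun _ h => h.2 h.1

theorem liminf_scaledCount_le_one (hp : 0 ≤ p) (h : lbdOf N < ENNReal.ofReal p) :
    liminf (scaledCount N p) (𝓝[>] 0) ≤ 1 :=
  liminf_le_of_frequently_le <|
    ((frequently_lt_of_liminf_lt (by isBoundedDefault) h).and_eventually
      (eventually_scaledCount_le_one hp)).mono fun _ h => h.2 h.1

theorem one_le_lbdOf {c : ℝ} (hc : 0 < c) (h : ∀ r > 0, c / r ≤ N r + 1) : 1 ≤ lbdOf N := by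
  refine ENNReal.le_of_forall_nnreal_lt fun q hq => le_liminf_of_le (by isBoundedDefault) ?_
  have hq1 : (q : ℝ) < 1 := by exact_mod_cast hq
  filter_upwards [(tendsto_rpow_neg_nhdsGT_zero (by linarith : (q : ℝ) - 1 < 0)).eventually_gt_atTop
      (2 / c), Ioo_mem_nhdsGT one_pos] with r hlarge hr
  have hN : c / r - 1 ≤ N r := by linarith [h r hr.1]
  have hrq : r ^ (q : ℝ) ≤ 1 := Real.rpow_le_one hr.1.le hr.2.le q.coe_nonneg
  have hcr := (div_lt_iff₀ hc).1 hlarge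
  have hone : 1 < N r * r ^ (q : ℝ) := calc
    1 < c * r ^ ((q : ℝ) - 1) - r ^ (q : ℝ) := by linarith
    _ = (c / r - 1) * r ^ (q : ℝ) := by rw [Real.rpow_sub_one hr.1.ne']; field_simp
    _ ≤ N r * r ^ (q : ℝ) := mul_le_mul_of_nonneg_right hN (Real.rpow_nonneg hr.1.le _)
  rw [← ENNReal.ofReal_coe_nnreal]
  exact ENNReal.ofReal_le_ofReal ((one_lt_natCast_mul_rpow_iff hr q.coe_nonneg).1 hone).le

theorem one_sup_iSup_ofReal_eq {B : ℝ≥0∞} {P : ℝ → Prop} (hB : 1 ≤ B)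
    (hlt : ∀ p, 1 ≤ p → ENNReal.ofReal p < B → P p)
    (hgt : ∀ p, 1 ≤ p → B < ENNReal.ofReal p → ¬ P p) :
    1 ⊔ ⨆ (p : ℝ) (_ : 1 ≤ p) (_ : P p), ENNReal.ofReal p = B := by
  refine le_antisymm (sup_le hB (iSup₂_le fun p hp => iSup_le fun hP => not_lt.1 fun h =>
    hgt p hp h hP)) (ENNReal.le_of_forall_nnreal_lt fun q hq => ?_)
  rcases le_or_gt (q : ℝ≥0∞) 1 with hq1 | hq1
  · exact le_sup_of_le_left hq1
  have hq1' : 1 ≤ (q : ℝ) := by exact_mod_cast hq1.le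
  refine le_sup_of_le_right (le_iSup₂_of_le (q : ℝ) hq1' (le_iSup_of_le
    (hlt q hq1' (by rwa [ENNReal.ofReal_coe_nnreal])) ?_))
  rw [ENNReal.ofReal_coe_nnreal]

theorem ScaleDominated.trans (h₁₂ : ScaleDominated F₁ F₂) (h₂₃ : ScaleDominated F₂ F₃) :
    ScaleDominated F₁ F₃ := by
  obtain ⟨c, hc, C₁, C₂, h⟩ := h₁₂
  obtain ⟨d, hd, D₁, D₂, h'⟩ := h₂₃
  refine ⟨d * c, by positivity, C₁ * D₁, C₁ * D₂ + C₂, fun r hr => ?_⟩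
  calc F₁ r ≤ C₁ * F₂ (c * r) + C₂ := h r hr
    _ ≤ C₁ * (D₁ * F₃ (d * (c * r)) + D₂) + C₂ := by gcongr; exact h' _ (by positivity)
    _ = C₁ * D₁ * F₃ (d * c * r) + (C₁ * D₂ + C₂) := by rw [mul_assoc d]; ring

theorem ScaleDominated.eventually_scaledCount_le (h : ScaleDominated F₁ F₂) (hp : 0 ≤ p) :
    ∃ c > (0 : ℝ), ∃ A B : ℝ≥0∞, A ≠ ⊤ ∧ B ≠ ⊤ ∧
      ∀ᶠ r in 𝓝[>] 0, scaledCount F₁ p r ≤ A * scaledCount F₂ p (c * r) + B := by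
  obtain ⟨c, hc, C₁, C₂, h⟩ := h
  refine ⟨c, hc, ENNReal.ofReal (C₁ / c ^ p), C₂, ENNReal.ofReal_ne_top,
    ENNReal.natCast_ne_top _, ?_⟩
  filter_upwards [Ioo_mem_nhdsGT one_pos] with r hr
  have hF : (F₁ r : ℝ) ≤ C₁ * F₂ (c * r) + C₂ := by exact_mod_cast h r hr.1
  have hrp : r ^ p ≤ 1 := Real.rpow_le_one hr.1.le hr.2.le hp
  have hcr : 0 ≤ (c * r) ^ p := Real.rpow_nonneg (mul_pos hc hr.1).le p
  have key : (F₁ r : ℝ) * r ^ p ≤ C₁ / c ^ p * (F₂ (c * r) * (c * r) ^ p) + C₂ := calc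
    (F₁ r : ℝ) * r ^ p ≤ (C₁ * F₂ (c * r) + C₂) * r ^ p :=
      mul_le_mul_of_nonneg_right hF (Real.rpow_nonneg hr.1.le p)
    _ ≤ C₁ * F₂ (c * r) * r ^ p + C₂ := by
      rw [add_mul]; gcongr; exact mul_le_of_le_one_right (by positivity) hrp
    _ = C₁ / c ^ p * (F₂ (c * r) * (c * r) ^ p) + C₂ := by
      rw [Real.mul_rpow hc.le hr.1.le]; field_simp
  calc scaledCount F₁ p r ≤ ENNReal.ofReal (C₁ / c ^ p * (F₂ (c * r) * (c * r) ^ p) + C₂) :=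
        ENNReal.ofReal_le_ofReal key
    _ = _ := by
      rw [ENNReal.ofReal_add (by positivity) (Nat.cast_nonneg _),
        ENNReal.ofReal_mul (by positivity), ENNReal.ofReal_natCast, scaledCount]

theorem map_mul_left_nhdsGT_zero {c : ℝ} (hc : 0 < c) : map (c * ·) (𝓝[>] (0 : ℝ)) = 𝓝[>] 0 :=
  calc map (c * ·) (𝓝[>] (0 : ℝ)) = map (c * ·) (comap (c * ·) (𝓝[>] 0)) := by
        rw [comap_mulLeft_nhdsGT_zero hc]
    _ = 𝓝[>] 0 := map_comap_of_surjective (mul_left_surjective₀ hc.ne') _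

theorem ScaleDominated.limsup_eq_top (h : ScaleDominated F₁ F₂) (hp : 0 ≤ p)
    (h₁ : limsup (scaledCount F₁ p) (𝓝[>] 0) = ⊤) : limsup (scaledCount F₂ p) (𝓝[>] 0) = ⊤ := by
  obtain ⟨c, hc, A, B, hA, hB, hle⟩ := h.eventually_scaledCount_le hp
  have hmono : Monotone fun x : ℝ≥0∞ => A * x + B := fun _ _ hxy => by dsimp only; gcongr
  have hcont : Continuous fun x : ℝ≥0∞ => A * x + B :=
    (ENNReal.continuous_const_mul hA).add continuous_const
  by_contra hne
  have : limsup (scaledCount F₁ p) (𝓝[>] 0) ≤ A * limsup (scaledCount F₂ p) (𝓝[>] 0) + B :=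
    calc
    _ ≤ limsup ((fun x => A * x + B) ∘ (scaledCount F₂ p ∘ (c * ·))) (𝓝[>] 0) :=
        limsup_le_limsup hle
    _ = _ := by
        rw [← hmono.map_limsup_of_continuousAt _ hcont.continuousAt, limsup_comp,
          map_mul_left_nhdsGT_zero hc]
  rw [h₁, top_le_iff] at this
  exact ENNReal.add_ne_top.2 ⟨ENNReal.mul_ne_top hA hne, hB⟩ this

theorem ScaleDominated.liminf_eq_top (h : ScaleDominated F₁ F₂) (hp : 0 ≤ p)
    (h₁ : liminf (scaledCount F₁ p) (𝓝[>] 0) = ⊤) : liminf (scaledCount F₂ p) (𝓝[>] 0) = ⊤ := by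
  obtain ⟨c, hc, A, B, hA, hB, hle⟩ := h.eventually_scaledCount_le hp
  have hmono : Monotone fun x : ℝ≥0∞ => A * x + B := fun _ _ hxy => by dsimp only; gcongr
  have hcont : Continuous fun x : ℝ≥0∞ => A * x + B :=
    (ENNReal.continuous_const_mul hA).add continuous_const
  by_contra hne
  have : liminf (scaledCount F₁ p) (𝓝[>] 0) ≤ A * liminf (scaledCount F₂ p) (𝓝[>] 0) + B :=
    calc
    _ ≤ liminf ((fun x => A * x + B) ∘ (scaledCount F₂ p ∘ (c * ·))) (𝓝[>] 0) :=
        liminf_le_liminf hle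
    _ = _ := by
        rw [← hmono.map_liminf_of_continuousAt _ hcont.continuousAt, liminf_comp,
          map_mul_left_nhdsGT_zero hc]
  rw [h₁, top_le_iff] at this
  exact ENNReal.add_ne_top.2 ⟨ENNReal.mul_ne_top hA hne, hB⟩ this

end dimension

/-- The partitions of `prVar` with all increments equal to `r`, indexed by `ℕ` so that they can
be cut and shifted; the values `x i` for `i > n` play no role. -/
structure IsStepChain (φ : ℝ → ℝ) (r : ℝ) (n : ℕ) (x : ℕ → ℝ) : Prop where
  lt_succ : ∀ i < n, x i < x (i + 1)
  mem_Icc : ∀ i ≤ n, x i ∈ Icc (0 : ℝ) 1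
  abs_sub : ∀ i < n, |φ (x i) - φ (x (i + 1))| = r

def maxChainLength (φ : ℝ → ℝ) (r : ℝ) : ℕ :=
  sSup {n | ∃ x, IsStepChain φ r n x}

namespace IsStepChain

variable {φ : ℝ → ℝ} {r : ℝ} {n : ℕ} {x : ℕ → ℝ}

theorem zero (φ : ℝ → ℝ) (r : ℝ) : IsStepChain φ r 0 fun _ => 0 :=
  ⟨by simp, by simp, by simp⟩

theorem strictMonoOn (h : IsStepChain φ r n x) : StrictMonoOn x (Iic n) :=
  strictMonoOn_Iic_of_lt_succ fun i hi => h.lt_succ i hi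

theorem le_of_le (h : IsStepChain φ r n x) {i j : ℕ} (hij : i ≤ j) (hj : j ≤ n) : x i ≤ x j :=
  h.strictMonoOn.monotoneOn (mem_Iic.2 (hij.trans hj)) (mem_Iic.2 hj) hij

theorem abs_sub_zero_le (h : IsStepChain φ r n x) {k : ℕ} (hk : k ≤ n) :
    |φ (x k) - φ (x 0)| ≤ k * r := by
  induction k with
  | zero => simp
  | succ k ih =>
    have hstep := h.abs_sub k hk
    calc |φ (x (k + 1)) - φ (x 0)|
        ≤ |φ (x (k + 1)) - φ (x k)| + |φ (x k) - φ (x 0)| := abs_sub_le _ _ _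
      _ ≤ (k + 1 : ℕ) * r := by rw [abs_sub_comm, hstep]; push_cast; linarith [ih (by omega)]

theorem natCast_mul_le_one {δ : ℝ}
    (hδ : ∀ y ∈ Icc (0 : ℝ) 1, ∀ y' ∈ Icc (0 : ℝ) 1, |y - y'| < δ → |φ y - φ y'| < r)
    (h : IsStepChain φ r n x) : n * δ ≤ 1 := by
  have hstep : ∀ i < n, x i + δ ≤ x (i + 1) := fun i hi => by
    by_contra! hlt
    have := hδ _ (h.mem_Icc i hi.le) _ (h.mem_Icc (i + 1) hi) <| by
      rw [abs_sub_lt_iff]; constructor <;> linarith [h.lt_succ i hi]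
    exact this.ne (h.abs_sub i hi)
  have hgrow : ∀ k ≤ n, x 0 + k * δ ≤ x k := fun k hk => by
    induction k with
    | zero => simp
    | succ k ih => push_cast; linarith [ih (by omega), hstep k hk]
  linarith [hgrow n le_rfl, (h.mem_Icc 0 (Nat.zero_le n)).1, (h.mem_Icc n le_rfl).2]

theorem segment {ψ : ℝ → ℝ} {t C : ℝ} (h : IsStepChain φ r n x)
    (hrel : ∀ s, φ s = ψ (s + t) + C) {m k : ℕ} (hmk : m + k ≤ n)
    (hmem : ∀ i ≤ k, x (m + i) + t ∈ Icc (0 : ℝ) 1) :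
    IsStepChain ψ r k fun i => x (m + i) + t where
  lt_succ i hi := by
    rw [← add_assoc]
    linarith [h.lt_succ (m + i) (by omega)]
  mem_Icc := hmem
  abs_sub i hi := by simpa [hrel, ← add_assoc] using h.abs_sub (m + i) (by omega)

end IsStepChain

section maxChainLength

variable {φ : ℝ → ℝ} {r : ℝ}

theorem bddAbove_setOf_isStepChain (hφ : Continuous φ) (hr : 0 < r) :
    BddAbove {n | ∃ x, IsStepChain φ r n x} := by
  obtain ⟨δ, hδ, hδφ⟩ := Metric.uniformContinuousOn_iff.1
    (isCompact_Icc.uniformContinuousOn_of_continuous hφ.continuousOn) r hr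
  refine ⟨⌈1 / δ⌉₊, fun n hn => ?_⟩
  obtain ⟨x, hx⟩ := hn
  have : (n : ℝ) ≤ 1 / δ := by
    rw [le_div_iff₀ hδ]
    exact hx.natCast_mul_le_one fun y hy y' hy' h => hδφ y hy y' hy' h
  exact_mod_cast this.trans (Nat.le_ceil _)

theorem IsStepChain.le_maxChainLength (hφ : Continuous φ) (hr : 0 < r) {n : ℕ} {x : ℕ → ℝ}
    (h : IsStepChain φ r n x) : n ≤ maxChainLength φ r :=
  le_csSup (bddAbove_setOf_isStepChain hφ hr) ⟨x, h⟩

theorem exists_isStepChain_maxChainLength (hφ : Continuous φ) (hr : 0 < r) :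
    ∃ x, IsStepChain φ r (maxChainLength φ r) x :=
  Nat.sSup_mem (s := {n | ∃ x, IsStepChain φ r n x}) ⟨0, _, IsStepChain.zero φ r⟩
    (bddAbove_setOf_isStepChain hφ hr)

theorem maxChainLength_le {M : ℕ} (h : ∀ n x, IsStepChain φ r n x → n ≤ M) :
    maxChainLength φ r ≤ M :=
  csSup_le ⟨0, ⟨_, IsStepChain.zero φ r⟩⟩ fun _ ⟨x, hx⟩ => h _ x hx

theorem exists_isStepChain_iff {n : ℕ} :
    (∃ x, IsStepChain φ r n x) ↔ ∃ x : Fin (n + 1) → ℝ, IsPartition n x ∧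
      ∀ i : Fin n, |φ (x i.castSucc) - φ (x i.succ)| = r := by
  constructor
  · rintro ⟨x, hx⟩
    refine ⟨fun i => x i, ⟨fun i j hij => ?_, fun i => hx.mem_Icc i (Nat.lt_succ_iff.1 i.2)⟩,
      fun i => hx.abs_sub i i.2⟩
    exact hx.strictMonoOn (mem_Iic.2 (Nat.lt_succ_iff.1 i.2))
      (mem_Iic.2 (Nat.lt_succ_iff.1 j.2)) hij
  · rintro ⟨x, hx, hstep⟩
    have hcast (i : Fin n) : Fin.clamp i n = i.castSucc := Fin.ext (by simp [Fin.clamp, i.2.le])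
    have hsucc (i : Fin n) : Fin.clamp (i + 1) n = i.succ := Fin.ext (by simp [Fin.clamp])
    refine ⟨fun k => x (Fin.clamp k n), ⟨fun i hi => ?_, fun i _ => hx.2 _, fun i hi => ?_⟩⟩
    · rw [show i = (⟨i, hi⟩ : Fin n) from rfl, hcast, hsucc]
      exact hx.1 Fin.castSucc_lt_succ
    · simpa [hcast ⟨i, hi⟩, hsucc ⟨i, hi⟩] using hstep ⟨i, hi⟩

theorem prVar_eq_maxChainLength (hφ : Continuous φ) (hr : 0 < r) (p : ℝ) :
    prVar φ p r = ENNReal.ofReal (maxChainLength φ r * r ^ p) := by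
  have hsum : ∀ n (x : Fin (n + 1) → ℝ), (∀ i : Fin n, |φ (x i.castSucc) - φ (x i.succ)| = r) →
      varSum φ p n x = n * r ^ p := fun n x h => by simp [varSum, h]
  refine le_antisymm (iSup_le fun n => iSup_le fun x => iSup₂_le fun hx hstep => ?_) ?_
  · obtain ⟨y, hy⟩ := exists_isStepChain_iff.2 ⟨x, hx, hstep⟩
    rw [hsum n x hstep]
    gcongr
    exact_mod_cast hy.le_maxChainLength hφ hr
  · obtain ⟨x, hx, hstep⟩ := exists_isStepChain_iff.1 (exists_isStepChain_maxChainLength hφ hr)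
    rw [← hsum _ x hstep]
    exact le_iSup_of_le _ (le_iSup_of_le x (le_iSup₂_of_le hx hstep le_rfl))

end maxChainLength

/-- Rotating the circle by `b` cuts a chain at `b` into two chains of the rotated function. -/
theorem IsStepChain.le_two_mul_maxChainLength_add_one {φ ψ : ℝ → ℝ} {r b C : ℝ} {n : ℕ}
    {x : ℕ → ℝ} (hψ : Continuous ψ) (hψper : Function.Periodic ψ 1) (hr : 0 < r)
    (hb : b ∈ Icc (0 : ℝ) 1) (hrel : ∀ s, φ s = ψ (s - b) + C) (h : IsStepChain φ r n x) :
    n ≤ 2 * maxChainLength ψ r + 1 := by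
  have hex : ∃ m, n < m ∨ b ≤ x m := ⟨n + 1, Or.inl n.lt_succ_self⟩
  set m := Nat.find hex
  have hm : m ≤ n + 1 := Nat.find_min' hex (Or.inl n.lt_succ_self)
  have hbelow : ∀ i < m, x i < b := fun i hi => not_le.1 (not_or.1 (Nat.find_min hex hi)).2
  have habove : ∀ i, m ≤ i → i ≤ n → b ≤ x i := fun i hmi hin =>
    (Nat.find_spec hex).elim (fun hnm => absurd hnm (by omega))
      fun hbm => hbm.trans (h.le_of_le hmi hin)
  have hA : m - 1 ≤ maxChainLength ψ r := by
    rcases Nat.eq_zero_or_pos m with hm0 | hm0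
    · omega
    refine (h.segment (t := 1 - b) (C := C) (fun s => ?_) (m := 0) (by omega)
      fun i hi => ?_).le_maxChainLength hψ hr
    · rw [hrel, ← hψper]; ring_nf
    · have hx := h.mem_Icc (0 + i) (by omega)
      have := hbelow (0 + i) (by omega)
      constructor <;> linarith [hx.1, hb.2]
  have hB : n - m ≤ maxChainLength ψ r := by
    rcases lt_or_ge n m with hnm | hmn
    · omega
    refine (h.segment (t := -b) (C := C) (fun s => ?_) (m := m) (k := n - m) (by omega)
      fun i hi => ?_).le_maxChainLength hψ hr
    · rw [hrel, sub_eq_add_neg]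
    · have hx := h.mem_Icc (m + i) (by omega)
      have := habove (m + i) (by omega) (by omega)
      constructor <;> linarith [hx.2, hb.1]
  omega

section treeDist

variable {g : ℝ → ℝ}

theorem treeDist_comm (g : ℝ → ℝ) (y y' : ℝ) : treeDist g y y' = treeDist g y' y := by
  rw [treeDist, treeDist, uIcc_comm]; ring

theorem treeDist_self (g : ℝ → ℝ) (y : ℝ) : treeDist g y y = 0 := by
  rw [treeDist, uIcc_self, image_singleton, csInf_singleton]; ring

theorem treeDist_le_of_forall_abs_sub_le {y y' c ρ : ℝ}
    (h : ∀ s ∈ uIcc y y', |g s - c| ≤ ρ) : treeDist g y y' ≤ 4 * ρ := by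
  have hinf : c - ρ ≤ sInf (g '' uIcc y y') :=
    le_csInf (nonempty_uIcc.image g) fun _ ⟨s, hs, hgs⟩ =>
      hgs ▸ by linarith [(abs_le.1 (h s hs)).1]
  have hy := (abs_le.1 (h y left_mem_uIcc)).2
  have hy' := (abs_le.1 (h y' right_mem_uIcc)).2
  rw [treeDist]; linarith

theorem sub_le_treeDist (hg : Continuous g) {y y' z : ℝ} (hz : z ∈ uIcc y y') :
    g y - g z ≤ treeDist g y y' := by
  have hbdd := ((isCompact_uIcc (a := y) (b := y')).image hg).bddBelow
  have hz' := csInf_le hbdd (mem_image_of_mem g hz)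
  have hy' := csInf_le hbdd (mem_image_of_mem g (right_mem_uIcc (a := y) (b := y')))
  rw [treeDist]; linarith

end treeDist

section Nsep

variable {X : Type*} {d : X → X → ℝ} {A : Set X} {r : ℝ} {M : ℕ}

theorem Nsep_le (h : ∀ s : Finset X, (s : Set X) ⊆ A →
      (∀ x ∈ s, ∀ y ∈ s, x ≠ y → r < d x y) → s.card ≤ M) :
    Nsep d A r ≤ M :=
  csSup_le ⟨0, ∅, by simp⟩ fun _ ⟨s, hsA, hcard, hs⟩ => hcard ▸ h s hsA hs

theorem card_le_Nsep (h : ∀ s : Finset X, (s : Set X) ⊆ A →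
      (∀ x ∈ s, ∀ y ∈ s, x ≠ y → r < d x y) → s.card ≤ M)
    {s : Finset X} (hsA : (s : Set X) ⊆ A) (hs : ∀ x ∈ s, ∀ y ∈ s, x ≠ y → r < d x y) :
    s.card ≤ Nsep d A r :=
  le_csSup ⟨M, fun _ ⟨s, hsA, hcard, hs⟩ => hcard ▸ h s hsA hs⟩ ⟨s, hsA, rfl, hs⟩

end Nsep

section greedy

variable {g : ℝ → ℝ} {ρ : ℝ}

theorem exists_first_abs_sub_eq (hg : Continuous g) (hρ : 0 < ρ) {u s : ℝ} (hs : s ∈ Icc u 1)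
    (hgs : ρ ≤ |g s - g u|) :
    ∃ v ∈ Ioc u 1, |g v - g u| = ρ ∧ ∀ s ∈ Ico u v, |g s - g u| < ρ := by
  set K := Icc u 1 ∩ {s | ρ ≤ |g s - g u|}
  have hK : IsClosed K := isClosed_Icc.inter (isClosed_le continuous_const (by fun_prop))
  have hbdd : BddBelow K := ⟨u, fun _ hs => hs.1.1⟩
  have hv : sInf K ∈ K := hK.csInf_mem ⟨s, hs, hgs⟩ hbdd
  have hbefore : ∀ s ∈ Ico u (sInf K), |g s - g u| < ρ := fun s hs =>
    not_le.1 fun h => hs.2.not_ge (csInf_le hbdd ⟨⟨hs.1, hs.2.le.trans hv.1.2⟩, h⟩)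
  have hu : u < sInf K := hv.1.1.lt_of_ne fun h => by
    have := hv.2
    rw [← h, mem_ofPred_eq, sub_self, abs_zero] at this
    linarith
  obtain ⟨c, hc, hcρ⟩ := intermediate_value_Icc hv.1.1
    (f := fun s => |g s - g u|) (by fun_prop : Continuous _).continuousOn
    (⟨by simpa using hρ.le, hv.2⟩ : ρ ∈ Icc |g u - g u| |g (sInf K) - g u|)
  have hcv : c = sInf K := hc.2.eq_or_lt.resolve_right fun hlt => (hbefore c ⟨hc.1, hlt⟩).ne hcρ
  exact ⟨sInf K, ⟨hu, hv.1.2⟩, hcv ▸ hcρ, hbefore⟩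

structure IsGreedyChain (g : ℝ → ℝ) (ρ : ℝ) (n : ℕ) (t : ℕ → ℝ) : Prop
    extends IsStepChain g ρ n t where
  zero_eq : t 0 = 0
  abs_sub_lt : ∀ i < n, ∀ s ∈ Ico (t i) (t (i + 1)), |g s - g (t i)| < ρ

theorem IsGreedyChain.zero (g : ℝ → ℝ) (ρ : ℝ) : IsGreedyChain g ρ 0 fun _ => 0 :=
  { IsStepChain.zero g ρ with zero_eq := rfl, abs_sub_lt := by simp }

theorem IsGreedyChain.extend (hg : Continuous g) (hρ : 0 < ρ) {n : ℕ} {t : ℕ → ℝ}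
    (ht : IsGreedyChain g ρ n t) {s : ℝ} (hs : s ∈ Icc (t n) 1) (hgs : ρ ≤ |g s - g (t n)|) :
    ∃ t', IsGreedyChain g ρ (n + 1) t' := by
  obtain ⟨v, hv, hgv, hbefore⟩ := exists_first_abs_sub_eq hg hρ hs hgs
  refine ⟨fun i => if i ≤ n then t i else v, ⟨⟨fun i hi => ?_, fun i hi => ?_, fun i hi => ?_⟩,
    by simp [ht.zero_eq], fun i hi => ?_⟩⟩
  · rcases Nat.lt_succ_iff_lt_or_eq.1 hi with hi | rfl
    · simpa [hi.le, Nat.succ_le_of_lt hi] using ht.lt_succ i hi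
    · simpa using hv.1
  · rcases Nat.le_succ_iff.1 hi with hi | rfl
    · simpa [hi] using ht.mem_Icc i hi
    · simpa using ⟨(ht.mem_Icc n le_rfl).1.trans hv.1.le, hv.2⟩
  · rcases Nat.lt_succ_iff_lt_or_eq.1 hi with hi | rfl
    · simpa [hi.le, Nat.succ_le_of_lt hi] using ht.abs_sub i hi
    · simpa [abs_sub_comm] using hgv
  · rcases Nat.lt_succ_iff_lt_or_eq.1 hi with hi | rfl
    · simpa [hi.le, Nat.succ_le_of_lt hi] using ht.abs_sub_lt i hi
    · simpa using hbefore

theorem exists_isGreedyChain (hg : Continuous g) (hρ : 0 < ρ) :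
    ∃ n t, IsGreedyChain g ρ n t ∧ ∀ s ∈ Icc (t n) 1, |g s - g (t n)| < ρ := by
  set S := {n | ∃ t, IsGreedyChain g ρ n t}
  have hbdd : BddAbove S := (bddAbove_setOf_isStepChain hg hρ).mono fun _ hn =>
    Exists.imp (fun _ ht => ht.toIsStepChain) hn
  obtain ⟨t, ht⟩ : sSup S ∈ S :=
    Nat.sSup_mem ⟨0, (⟨_, IsGreedyChain.zero g ρ⟩ : ∃ t, _)⟩ hbdd
  refine ⟨_, t, ht, fun s hs => not_le.1 fun hgs => ?_⟩
  have := le_csSup hbdd (ht.extend hg hρ hs hgs)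
  omega

/-- The index of the greedy cell `[t k, t (k + 1))` containing `y`. -/
def cellIndex (t : ℕ → ℝ) (n : ℕ) (y : ℝ) : ℕ := Nat.findGreatest (fun k => t k ≤ y) n

theorem cellIndex_le (t : ℕ → ℝ) (n : ℕ) (y : ℝ) : cellIndex t n y ≤ n := Nat.findGreatest_le n

theorem IsGreedyChain.abs_sub_lt_of_mem_cell {n : ℕ} {t : ℕ → ℝ} (ht : IsGreedyChain g ρ n t)
    (hend : ∀ s ∈ Icc (t n) 1, |g s - g (t n)| < ρ) {y : ℝ} (hy : y ∈ Icc (0 : ℝ) 1) :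
    t (cellIndex t n y) ≤ y ∧
      ∀ s ∈ Icc (t (cellIndex t n y)) y, |g s - g (t (cellIndex t n y))| < ρ := by
  have hle := cellIndex_le t n y
  have hty : t (cellIndex t n y) ≤ y :=
    Nat.findGreatest_spec (P := fun k => t k ≤ y) (Nat.zero_le n) (ht.zero_eq ▸ hy.1)
  refine ⟨hty, fun s hs => ?_⟩
  rcases hle.lt_or_eq with hlt | heq
  · have hnext : y < t (cellIndex t n y + 1) :=
      not_le.1 (Nat.findGreatest_is_greatest (Nat.lt_succ_self _) hlt)
    exact ht.abs_sub_lt _ hlt s ⟨hs.1, hs.2.trans_lt hnext⟩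
  · rw [heq] at hs ⊢
    exact hend s ⟨hs.1, hs.2.trans hy.2⟩

end greedy

section treeCount

variable {g : ℝ → ℝ}

/-- The packing number `N_r(T(g))`. -/
def treeCount (g : ℝ → ℝ) (r : ℝ) : ℕ := Nsep (treeDist g) (Icc 0 1) r

/-- Two points of the same greedy `r/4`-cell are `r`-close in `d_g`. -/
theorem card_le_maxChainLength_add_one (hg : Continuous g) {r : ℝ} (hr : 0 < r) {S : Finset ℝ}
    (hS : (S : Set ℝ) ⊆ Icc 0 1) (hsep : ∀ y ∈ S, ∀ y' ∈ S, y ≠ y' → r < treeDist g y y') :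
    S.card ≤ maxChainLength g (r / 4) + 1 := by
  obtain ⟨n, t, ht, hend⟩ := exists_isGreedyChain hg (by positivity : 0 < r / 4)
  have hinj : Set.InjOn (cellIndex t n) S := by
    intro y hy y' hy' hyy'
    by_contra hne
    obtain ⟨hty, hcell⟩ := ht.abs_sub_lt_of_mem_cell hend (hS hy)
    obtain ⟨hty', hcell'⟩ := ht.abs_sub_lt_of_mem_cell hend (hS hy')
    rw [hyy'] at hty hcell
    refine (hsep y hy y' hy' hne).not_ge ?_
    have := treeDist_le_of_forall_abs_sub_le (g := g) (y := y) (y' := y')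
      (c := g (t (cellIndex t n y'))) (ρ := r / 4) fun s hs => ?_
    · linarith
    rcases mem_uIcc.1 hs with hs | hs
    · exact (hcell' s ⟨hty.trans hs.1, hs.2⟩).le
    · exact (hcell s ⟨hty'.trans hs.1, hs.2⟩).le
  have hcard := Finset.card_le_card_of_injOn (t := Finset.range (n + 1)) (cellIndex t n)
    (fun y _ => Finset.mem_range.2 (Nat.lt_succ_of_le (cellIndex_le t n _))) hinj
  have hn := ht.le_maxChainLength hg (by positivity)
  rw [Finset.card_range] at hcard
  omega

theorem treeCount_le (hg : Continuous g) {r : ℝ} (hr : 0 < r) :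
    treeCount g r ≤ maxChainLength g (r / 4) + 1 :=
  Nsep_le fun _ hS hsep => card_le_maxChainLength_add_one hg hr hS hsep

theorem card_le_treeCount (hg : Continuous g) {r : ℝ} (hr : 0 < r) {S : Finset ℝ}
    (hS : (S : Set ℝ) ⊆ Icc 0 1) (hsep : ∀ y ∈ S, ∀ y' ∈ S, y ≠ y' → r < treeDist g y y') :
    S.card ≤ treeCount g r :=
  card_le_Nsep (fun _ hS hsep => card_le_maxChainLength_add_one hg hr hS hsep) hS hsep

theorem card_le_treeCount_of_pairwise (hg : Continuous g) {ρ : ℝ} (hρ : 0 < ρ) {I : Finset ℕ}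
    {y : ℕ → ℝ} (hy : ∀ i ∈ I, y i ∈ Icc (0 : ℝ) 1)
    (hsep : ∀ i ∈ I, ∀ j ∈ I, i < j → ρ ≤ treeDist g (y i) (y j)) :
    I.card ≤ treeCount g (ρ / 2) := by
  have hsep' : ∀ i ∈ I, ∀ j ∈ I, i ≠ j → ρ / 2 < treeDist g (y i) (y j) := by
    intro i hi j hj hij
    rcases hij.lt_or_gt with h | h
    · linarith [hsep i hi j hj h]
    · linarith [hsep j hj i hi h, treeDist_comm g (y i) (y j)]
  have hinj : Set.InjOn y I := fun i hi j hj hyij => by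
    by_contra hne
    have := hsep' i hi j hj hne
    rw [hyij, treeDist_self] at this
    linarith
  rw [← Finset.card_image_of_injOn hinj]
  refine card_le_treeCount hg (by positivity) (by simpa [Set.subset_def] using hy) ?_
  simp only [Finset.mem_image]
  rintro _ ⟨i, hi, rfl⟩ _ ⟨j, hj, rfl⟩ hne
  exact hsep' i hi j hj fun h => hne (h ▸ rfl)

/-- In a `ρ`-chain the tops of the up-steps are pairwise `ρ`-apart in `d_g`, and so are the
bottoms of the down-steps. -/
theorem maxChainLength_le_two_mul_treeCount (hg : Continuous g) {ρ : ℝ} (hρ : 0 < ρ) :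
    maxChainLength g ρ ≤ 2 * treeCount g (ρ / 2) := by
  obtain ⟨x, hx⟩ := exists_isStepChain_maxChainLength hg hρ
  set n := maxChainLength g ρ
  set U := (Finset.range n).filter fun i => g (x i) < g (x (i + 1))
  set D := (Finset.range n).filter fun i => ¬ g (x i) < g (x (i + 1))
  have hU : U.card ≤ treeCount g (ρ / 2) := by
    refine card_le_treeCount_of_pairwise hg hρ (y := fun i => x (i + 1))
      (fun i hi => hx.mem_Icc _ (Finset.mem_range.1 (Finset.mem_filter.1 hi).1))
      fun i hi j hj hij => ?_
    simp only [U, Finset.mem_filter, Finset.mem_range] at hi hj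
    have hup := hx.abs_sub j hj.1
    rw [abs_sub_comm, abs_of_pos (by linarith [hj.2])] at hup
    rw [treeDist_comm, ← hup]
    exact sub_le_treeDist hg (mem_uIcc.2 (Or.inr
      ⟨hx.le_of_le (by omega) (by omega), hx.le_of_le (by omega) (by omega)⟩))
  have hD : D.card ≤ treeCount g (ρ / 2) := by
    refine card_le_treeCount_of_pairwise hg hρ (y := x)
      (fun i hi => hx.mem_Icc _ (Finset.mem_range.1 (Finset.mem_filter.1 hi).1).le)
      fun i hi j hj hij => ?_
    simp only [D, Finset.mem_filter, Finset.mem_range] at hi hj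
    have hdown := hx.abs_sub i hi.1
    rw [abs_of_nonneg (by linarith [not_lt.1 hi.2])] at hdown
    rw [← hdown]
    exact sub_le_treeDist hg (mem_uIcc.2 (Or.inl
      ⟨hx.le_of_le (by omega) (by omega), hx.le_of_le (by omega) (by omega)⟩))
  have hUD : U.card + D.card = n := by
    rw [Finset.card_filter_add_card_filter_not, Finset.card_range]
  omega

theorem abs_sub_le_maxChainLength (hg : Continuous g) {ρ : ℝ} (hρ : 0 < ρ) {w : ℝ}
    (hw : w ∈ Icc (0 : ℝ) 1) : |g w - g 0| ≤ (maxChainLength g ρ + 1) * ρ := by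
  obtain ⟨n, t, ht, hend⟩ := exists_isGreedyChain hg hρ
  obtain ⟨htw, hcell⟩ := ht.abs_sub_lt_of_mem_cell hend hw
  have hk : (cellIndex t n w : ℝ) ≤ maxChainLength g ρ := by
    exact_mod_cast (cellIndex_le t n w).trans (ht.le_maxChainLength hg hρ)
  have h₁ := hcell w ⟨htw, le_rfl⟩
  have h₂ := ht.abs_sub_zero_le (cellIndex_le t n w)
  rw [ht.zero_eq] at h₂
  calc |g w - g 0| ≤ |g w - g (t (cellIndex t n w))| + |g (t (cellIndex t n w)) - g 0| :=
        abs_sub_le _ _ _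
    _ ≤ (maxChainLength g ρ + 1) * ρ := by nlinarith

theorem div_le_treeCount_add_one (hg : Continuous g) {w : ℝ} (hw : w ∈ Icc (0 : ℝ) 1) {r : ℝ}
    (hr : 0 < r) : |g w - g 0| / 4 / r ≤ treeCount g r + 1 := by
  have h₁ := abs_sub_le_maxChainLength hg (by positivity : 0 < 2 * r) hw
  have h₂ : (maxChainLength g (2 * r) : ℝ) ≤ 2 * treeCount g r := by
    exact_mod_cast (maxChainLength_le_two_mul_treeCount hg (by positivity : 0 < 2 * r)).trans
      (by rw [mul_div_cancel_left₀ r two_ne_zero])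
  rw [div_div, div_le_iff₀ (by positivity)]
  nlinarith

end treeCount

theorem scaleDominated_maxChainLength_of_eq_sub {φ ψ : ℝ → ℝ} (hψ : Continuous ψ)
    (hψper : Function.Periodic ψ 1) {b C : ℝ} (hb : b ∈ Icc (0 : ℝ) 1)
    (hrel : ∀ s, φ s = ψ (s - b) + C) :
    ScaleDominated (maxChainLength φ) (maxChainLength ψ) :=
  ⟨1, one_pos, 2, 1, fun r hr => by
    rw [one_mul]
    exact maxChainLength_le fun _ _ h => h.le_two_mul_maxChainLength_add_one hψ hψper hr hb hrel⟩

theorem scaleDominated_treeCount_maxChainLength {g : ℝ → ℝ} (hg : Continuous g) :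
    ScaleDominated (treeCount g) (maxChainLength g) :=
  ⟨4⁻¹, by norm_num, 1, 1, fun r hr => by
    rw [one_mul, inv_mul_eq_div]
    exact treeCount_le hg hr⟩

theorem scaleDominated_maxChainLength_treeCount {g : ℝ → ℝ} (hg : Continuous g) :
    ScaleDominated (maxChainLength g) (treeCount g) :=
  ⟨2⁻¹, by norm_num, 2, 0, fun r hr => by
    rw [add_zero, inv_mul_eq_div]
    exact maxChainLength_le_two_mul_treeCount hg hr⟩

theorem one_le_lbdOf_treeCount {g : ℝ → ℝ} (hg : Continuous g) {w : ℝ} (hw : w ∈ Icc (0 : ℝ) 1)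
    (hgw : g w ≠ g 0) : 1 ≤ lbdOf (treeCount g) :=
  one_le_lbdOf (by positivity : 0 < |g w - g 0| / 4) fun _ hr => div_le_treeCount_add_one hg hw hr

theorem Function.Periodic.exists_mem_Icc_ne {g : ℝ → ℝ} {c : ℝ} (h : Function.Periodic g c)
    (hc : 0 < c) (hnc : ∃ x y, g x ≠ g y) : ∃ w ∈ Icc 0 c, g w ≠ g 0 := by
  by_contra! hconst
  obtain ⟨x, y, hxy⟩ := hnc
  have hg (z : ℝ) : g z = g 0 := by
    obtain ⟨z', hz', hzz'⟩ := h.exists_mem_Ico₀ hc z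
    exact hzz'.trans (hconst z' (Ico_subset_Icc_self hz'))
  exact hxy ((hg x).trans (hg y).symm)

section varIndex

variable {f : ℝ → ℝ} {N : ℝ → ℕ}

theorem uVarContent_eq_limsup (hf : Continuous f) (p : ℝ) :
    uVarContent f p = limsup (scaledCount (maxChainLength f) p) (𝓝[>] 0) :=
  limsup_congr (eventually_mem_nhdsWithin.mono fun _ hr => prVar_eq_maxChainLength hf hr p)

theorem lVarContent_eq_liminf (hf : Continuous f) (p : ℝ) :
    lVarContent f p = liminf (scaledCount (maxChainLength f) p) (𝓝[>] 0) :=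
  liminf_congr (eventually_mem_nhdsWithin.mono fun _ hr => prVar_eq_maxChainLength hf hr p)

theorem upperVarIndex_eq_ubdOf (hf : Continuous f) (h₁ : ScaleDominated (maxChainLength f) N)
    (h₂ : ScaleDominated N (maxChainLength f)) (h1 : 1 ≤ ubdOf N) : upperVarIndex f = ubdOf N :=
  one_sup_iSup_ofReal_eq h1
    (fun p hp hlt => (uVarContent_eq_limsup hf p).trans
      (h₂.limsup_eq_top (by linarith) (limsup_scaledCount_eq_top hlt)))
    fun p hp hgt htop => by
      have := h₁.limsup_eq_top (by linarith) ((uVarContent_eq_limsup hf p).symm.trans htop)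
      simpa [this] using limsup_scaledCount_le_one (by linarith) hgt

theorem lowerVarIndex_eq_lbdOf (hf : Continuous f) (h₁ : ScaleDominated (maxChainLength f) N)
    (h₂ : ScaleDominated N (maxChainLength f)) (h1 : 1 ≤ lbdOf N) : lowerVarIndex f = lbdOf N :=
  one_sup_iSup_ofReal_eq h1
    (fun p hp hlt => (lVarContent_eq_liminf hf p).trans
      (h₂.liminf_eq_top (by linarith) (liminf_scaledCount_eq_top hlt)))
    fun p hp hgt htop => by
      have := h₁.liminf_eq_top (by linarith) ((lVarContent_eq_liminf hf p).symm.trans htop)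
      simpa [this] using liminf_scaledCount_le_one (by linarith) hgt

end varIndex

theorem box_dims_eq_varIndices_general (f : ℝ → ℝ) (hf : Continuous f)
    (hper : ∀ x, f (x + 1) = f x) (hnc : ∃ x y, f x ≠ f y)
    (a : ℝ) (ha : a ∈ Set.Icc (0 : ℝ) 1) :
    lbdTree (fun x => f (x + a) - f a) = lowerVarIndex f ∧
    ubdTree (fun x => f (x + a) - f a) = upperVarIndex f := by
  set g := fun x => f (x + a) - f a
  have hg : Continuous g := by fun_prop
  have hgper : Function.Periodic g 1 := fun x => by simp only [g, add_right_comm x 1 a, hper]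
  have hfg : ScaleDominated (maxChainLength f) (maxChainLength g) :=
    scaleDominated_maxChainLength_of_eq_sub hg hgper ha (C := f a) fun s => by simp [g]
  have hb : 1 - a ∈ Icc (0 : ℝ) 1 := ⟨by linarith [ha.2], by linarith [ha.1]⟩
  have hgf : ScaleDominated (maxChainLength g) (maxChainLength f) :=
    scaleDominated_maxChainLength_of_eq_sub hf hper hb (C := -f a) fun s => by
      rw [← hper]; simp only [g]; ring_nf
  obtain ⟨w, hw, hgw⟩ := hgper.exists_mem_Icc_ne one_pos <| by
    obtain ⟨x, y, hxy⟩ := hnc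
    exact ⟨x - a, y - a, by simpa [g] using hxy⟩
  have h1 : 1 ≤ lbdOf (treeCount g) := one_le_lbdOf_treeCount hg hw hgw
  have hT₁ := hfg.trans (scaleDominated_maxChainLength_treeCount hg)
  have hT₂ := (scaleDominated_treeCount_maxChainLength hg).trans hgf
  exact ⟨(lowerVarIndex_eq_lbdOf hf hT₁ hT₂ h1).symm,
    (upperVarIndex_eq_ubdOf hf hT₁ hT₂ (h1.trans liminf_le_limsup)).symm⟩

/-- For a non-constant continuous circle mapping `f`, the lower box dimension of the real
tree `T(f)` equals the lower variation index and the upper box dimension equals the upper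
variation index. -/
theorem box_dims_eq_varIndices (f : ℝ → ℝ) (hf : Continuous f)
    (hper : ∀ x, f (x + 1) = f x) (hnc : ∃ x y, f x ≠ f y)
    (a : ℝ) (ha : a ∈ Set.Icc (0 : ℝ) 1) (hmin : ∀ x ∈ Set.Icc (0 : ℝ) 1, f a ≤ f x) :
    lbdTree (fun x => f (x + a) - f a) = lowerVarIndex f ∧
    ubdTree (fun x => f (x + a) - f a) = upperVarIndex f :=
  box_dims_eq_varIndices_general f hf hper hnc a ha

end
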